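/- Let L be a language over a finite alphabet Σ recognized by a deterministic automaton whose set of final states is finite (its set of states may be infinite). If the set L_∞ of infinite words having infinitely many prefixes in L is uncountable, then L is exponential. -/

import Mathlib

/-- The prefix of length `ℓ` of an infinite word `w : ℕ → A`. -/
def prefixOf {A : Type*} (w : ℕ → A) (ℓ : ℕ) : List A := List.ofFn (fun i : Fin ℓ => w i)

/-- `Linf L` : infinite words having infinitely many finite prefixes in `L`. -/
def Linf {A : Type*} (L : Set (List A)) : Set (ℕ → A) :=
  {w | {n : ℕ | prefixOf w n ∈ L}.Infinite}

/-- Transition function of a deterministic automaton extended to words. -/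
def deltaStar {Q A : Type*} (δ : Q → A → Q) (q : Q) (w : List A) : Q := w.foldl δ q

/-- A language `M` is exponential if the number of its words of length `n`
is at least `c·θⁿ` for some `θ > 1`, `c > 0` and infinitely many `n`. -/
def Exponential {A : Type*} (M : Set (List A)) : Prop :=
  ∃ θ : ℝ, 1 < θ ∧ ∃ c : ℝ, 0 < c ∧
    ∀ N : ℕ, ∃ n : ℕ, N ≤ n ∧ c * θ ^ n ≤ ({w ∈ M | w.length = n}.ncard : ℝ)

/-!
As `F` is finite, some final state `f` is visited infinitely often by uncountably many infinite
words, and since there are only countably many finite words, uncountably many of those share a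
prefix `u` leading to `f`. If all loops at `f` (words `v` with `δ(f, v) = f`) commuted, any two
such words would coincide: cutting them at later and later visits of `f` gives loops `x`, `y`,
and `xy = yx` forces the shorter one to be a prefix of the longer one. Hence there are loops with
`xy ≠ yx`; then `X = xy` and `Y = yx` are distinct loops of equal length `m`, and the `2ᵏ` words
`u Z₁ ⋯ Zₖ` with `Zᵢ ∈ {X, Y}` of length `|u| + k m` all lie in `L`.
-/

lemma prefixOf_length {A : Type*} (w : ℕ → A) (n : ℕ) : (prefixOf w n).length = n := by
  simp [prefixOf]

lemma prefixOf_isPrefix {A : Type*} (w : ℕ → A) {m n : ℕ} (h : m ≤ n) :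
    prefixOf w m <+: prefixOf w n := by
  rw [List.prefix_iff_eq_take]
  apply List.ext_getElem
  · simp [prefixOf, h]
  · simp [prefixOf]

lemma apply_eq_of_prefixOf_eq {A : Type*} {w w' : ℕ → A} {n i : ℕ}
    (h : prefixOf w n = prefixOf w' n) (hi : i < n) : w i = w' i :=
  congrFun (List.ofFn_injective h) ⟨i, hi⟩

lemma Linf_biUnion_subset {A ι : Type*} {s : Set ι} (hs : s.Finite) (L : ι → Set (List A)) :
    Linf (⋃ i ∈ s, L i) ⊆ ⋃ i ∈ s, Linf (L i) := by
  intro w hw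
  by_contra h
  simp only [Set.mem_iUnion, not_exists] at h
  have hfin : (⋃ i ∈ s, {n | prefixOf w n ∈ L i}).Finite :=
    hs.biUnion fun i hi => Set.not_infinite.mp (h i hi)
  exact hw (hfin.subset fun n hn => by simpa using hn)

lemma exists_mem_prefixOf_not_countable {A : Type*} [Countable A] {M : Set (List A)}
    (h : ¬ (Linf M).Countable) :
    ∃ u ∈ M, ¬ {w ∈ Linf M | prefixOf w u.length = u}.Countable := by
  by_contra! hcount
  refine h (((Set.to_countable M).biUnion hcount).mono fun w hw => ?_)
  obtain ⟨n, hn⟩ := Set.Infinite.nonempty hw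
  exact Set.mem_biUnion hn ⟨hw, by rw [prefixOf_length]⟩

lemma List.isPrefix_of_append_comm {A : Type*} {x y : List A} (h : x ++ y = y ++ x)
    (hlen : y.length ≤ x.length) : y <+: x :=
  List.prefix_of_prefix_length_le (h ▸ List.prefix_append y x) (List.prefix_append x y) hlen

section Automaton

variable {Q A : Type*} (δ : Q → A → Q)

lemma deltaStar_append (q : Q) (a b : List A) :
    deltaStar δ q (a ++ b) = deltaStar δ (deltaStar δ q a) b :=
  List.foldl_append

lemma exists_loop_of_prefixOf {q₀ f : Q} {u : List A} {w : ℕ → A}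
    (hu : deltaStar δ q₀ u = f) (hwu : prefixOf w u.length = u) {n : ℕ}
    (hn : deltaStar δ q₀ (prefixOf w n) = f) (hle : u.length ≤ n) :
    ∃ x, prefixOf w n = u ++ x ∧ deltaStar δ f x = f := by
  obtain ⟨x, hx⟩ := hwu ▸ prefixOf_isPrefix w hle
  refine ⟨x, hx.symm, ?_⟩
  rwa [← hx, deltaStar_append, hu] at hn

lemma subsingleton_of_loops_commute {q₀ f : Q}
    (hcomm : ∀ x y, deltaStar δ f x = f → deltaStar δ f y = f → x ++ y = y ++ x)
    {u : List A} (hu : deltaStar δ q₀ u = f) :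
    {w ∈ Linf {v | deltaStar δ q₀ v = f} | prefixOf w u.length = u}.Subsingleton := by
  rintro w ⟨hw, hwu⟩ w' ⟨hw', hw'u⟩
  funext i
  obtain ⟨n', hn', hlt'⟩ := Set.Infinite.exists_gt hw' (max i u.length)
  obtain ⟨n, hn, hlt⟩ := Set.Infinite.exists_gt hw n'
  obtain ⟨x, hx, hxf⟩ := exists_loop_of_prefixOf δ hu hwu hn (by omega)
  obtain ⟨y, hy, hyf⟩ := exists_loop_of_prefixOf δ hu hw'u hn' (by omega)
  have hlen : y.length ≤ x.length := by
    have := congrArg List.length hx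
    have := congrArg List.length hy
    simp only [prefixOf_length, List.length_append] at *
    omega
  have hyx : prefixOf w' n' <+: prefixOf w n := by
    rw [hx, hy, List.prefix_append_right_inj]
    exact List.isPrefix_of_append_comm (hcomm x y hxf hyf) hlen
  have hpre : prefixOf w' n' = prefixOf w n' :=
    (List.prefix_of_prefix_length_le hyx (prefixOf_isPrefix w hlt.le)
      (by simp [prefixOf_length])).eq_of_length (by simp [prefixOf_length])
  exact apply_eq_of_prefixOf_eq hpre.symm (by omega)

end Automaton

def blockWord {A : Type*} (X Y : List A) (b : List Bool) : List A :=
  b.flatMap (cond · X Y)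

section blockWord

variable {A : Type*} {X Y : List A}

lemma blockWord_length (hlen : X.length = Y.length) (b : List Bool) :
    (blockWord X Y b).length = X.length * b.length := by
  induction b with
  | nil => simp [blockWord]
  | cons t b ih =>
    cases t <;> simp_all [blockWord, List.flatMap_cons, Nat.mul_succ, Nat.add_comm]

lemma blockWord_injective (hlen : X.length = Y.length) (hne : X ≠ Y) {b b' : List Bool}
    (hb : b.length = b'.length) (h : blockWord X Y b = blockWord X Y b') : b = b' := by
  induction b generalizing b' with
  | nil => exact (List.length_eq_zero_iff.mp hb.symm).symm
  | cons t b ih =>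
    obtain _ | ⟨t', b'⟩ := b'
    · simp at hb
    have hhead : (cond t X Y).length = (cond t' X Y).length := by
      cases t <;> cases t' <;> simp [hlen]
    obtain ⟨htt', hbb'⟩ := List.append_inj (by simpa [blockWord] using h) hhead
    have ht : t = t' := by cases t <;> cases t' <;> simp_all
    rw [ht, ih (by simpa using hb) hbb']

lemma deltaStar_blockWord {Q : Type*} (δ : Q → A → Q) {f : Q}
    (hX : deltaStar δ f X = f) (hY : deltaStar δ f Y = f) (b : List Bool) :
    deltaStar δ f (blockWord X Y b) = f := by
  induction b with
  | nil => rfl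
  | cons t b ih =>
    cases t <;> simp_all [blockWord, List.flatMap_cons, deltaStar_append]

end blockWord

lemma exponential_of_two_pow_le {A : Type*} {M : Set (List A)} {a m : ℕ} (hm : 0 < m)
    (h : ∀ k, 2 ^ k ≤ {w ∈ M | w.length = a + m * k}.ncard) : Exponential M := by
  set θ : ℝ := 2 ^ ((m : ℝ)⁻¹)
  have hθm : θ ^ m = 2 := Real.rpow_inv_natCast_pow (by norm_num) hm.ne'
  refine ⟨θ, Real.one_lt_rpow (by norm_num) (by positivity), (θ ^ a)⁻¹, by positivity,
    fun N => ⟨a + m * N, le_add_left (Nat.le_mul_of_pos_left N hm), ?_⟩⟩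
  calc (θ ^ a)⁻¹ * θ ^ (a + m * N) = 2 ^ N := by
        rw [pow_add, pow_mul, hθm, inv_mul_cancel_left₀ (by positivity)]
    _ ≤ _ := by exact_mod_cast h N

lemma exponential_of_append_blockWord {A : Type*} [Finite A] {M : Set (List A)}
    {u X Y : List A} (hlen : X.length = Y.length) (hne : X ≠ Y)
    (hM : ∀ b, u ++ blockWord X Y b ∈ M) : Exponential M := by
  have hX : 0 < X.length := by
    refine List.length_pos_iff.mpr fun hX => hne ?_
    rw [hX, eq_comm, ← List.length_eq_zero_iff, ← hlen, hX, List.length_nil]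
  refine exponential_of_two_pow_le (a := u.length) hX fun k => ?_
  have hfin : {w ∈ M | w.length = u.length + X.length * k}.Finite :=
    (List.finite_length_eq A _).subset fun w hw => hw.2
  calc 2 ^ k = (Set.univ : Set (Fin k → Bool)).ncard := by simp
    _ ≤ {w ∈ M | w.length = u.length + X.length * k}.ncard := by
      refine Set.ncard_le_ncard_of_injOn (fun b => u ++ blockWord X Y (List.ofFn b))
        (fun b _ => ⟨hM _, by simp [blockWord_length hlen]⟩) (fun b _ b' _ h => ?_) hfin
      exact List.ofFn_injective
        (blockWord_injective hlen hne (by simp) (List.append_cancel_left h))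

theorem stmt_9 {Γ : Type*} [Fintype Γ] (L : Set (List Γ))
    {Q : Type*} (q0 : Q) (δ : Q → Γ → Q) (F : Set Q) (hF : F.Finite)
    (hL : L = {w | deltaStar δ q0 w ∈ F})
    (huncount : ¬ (Linf L).Countable) :
    Exponential L := by
  have hunion : L = ⋃ f ∈ F, {w | deltaStar δ q0 w = f} := by ext; simp [hL]
  obtain ⟨f, hfF, hf⟩ : ∃ f ∈ F, ¬ (Linf {w | deltaStar δ q0 w = f}).Countable := by
    by_contra! h
    exact huncount ((hF.countable.biUnion h).mono (hunion ▸ Linf_biUnion_subset hF _))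
  obtain ⟨u, hu : deltaStar δ q0 u = f, hcyl⟩ := exists_mem_prefixOf_not_countable hf
  obtain ⟨x, y, hx, hy, hxy⟩ :
      ∃ x y, deltaStar δ f x = f ∧ deltaStar δ f y = f ∧ x ++ y ≠ y ++ x := by
    by_contra! hcomm
    exact hcyl (subsingleton_of_loops_commute δ hcomm hu).countable
  refine exponential_of_append_blockWord (u := u) (by simp [add_comm]) hxy fun b => ?_
  rw [hL]
  change deltaStar δ q0 (u ++ _) ∈ F
  rwa [deltaStar_append, hu, deltaStar_blockWord δ (by rw [deltaStar_append, hx, hy])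
    (by rw [deltaStar_append, hy, hx])]
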